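/- arXiv:math/0305170 — 2 statements merged into one kernel-verified Lean document; each statement's English description precedes it below -/
import Mathlib

section
/- Let m ≥ 1, let λ₁, …, λ_m be positive real numbers that are linearly independent over ℚ, and let τ > 0. Then the set { (e^{iλ₁z}, …, e^{iλ_m z}) : z ∈ ℂ, Im z = τ } is dense in the real torus T = { v ∈ ℂᵐ : |v_k| = e^{-λ_k τ} for all k }. -/
/-!
Kronecker's theorem via Fourier analysis on the torus `(ℝ/ℤ)ᵐ`. Let `H` be the closure of the
linear flow `t ↦ t • λ`. Rational independence makes every nontrivial character `mFourier n`
nontrivial on `H`, so the Haar probability measure of `H`, pushed forward to the torus, has the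
same Fourier coefficients as the Haar measure of the torus. By Stone–Weierstrass the two measures
coincide, hence the open set `Hᶜ` is null for Haar measure and therefore empty.
The torus `T` is the continuous image of `(ℝ/ℤ)ᵐ` under `y ↦ (e^{-λₖτ} e^{2πi yₖ})ₖ`, which maps
`t • λ` to the line point `z = 2πt + iτ`.
-/

open Complex MeasureTheory Measure Set TopologicalSpace
open scoped Real

instance isProbabilityMeasure_addHaarMeasure_top {G : Type*} [AddGroup G] [TopologicalSpace G]
    [IsTopologicalAddGroup G] [CompactSpace G] [MeasurableSpace G] [BorelSpace G] :
    IsProbabilityMeasure (addHaarMeasure (⊤ : PositiveCompacts G)) :=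
  ⟨by simpa using addHaarMeasure_self (K₀ := (⊤ : PositiveCompacts G))⟩

theorem integral_eq_zero_of_add_left_eq_mul {G : Type*} [AddGroup G] [MeasurableSpace G]
    [MeasurableAdd G] (μ : Measure G) [μ.IsAddLeftInvariant] {f : G → ℂ} {g : G} {c : ℂ}
    (hc : c ≠ 1) (hf : ∀ x, f (g + x) = c * f x) : ∫ x, f x ∂μ = 0 := by
  have h := integral_add_left_eq_self (μ := μ) f g
  simp_rw [hf, integral_const_mul] at h
  have : (c - 1) * ∫ x, f x ∂μ = 0 := by linear_combination h
  exact (mul_eq_zero.mp this).resolve_left (sub_ne_zero.mpr hc)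

namespace ContinuousMap

variable {X E : Type*} [TopologicalSpace X] [CompactSpace X] [MeasurableSpace X] [BorelSpace X]
  [NormedAddCommGroup E] [NormedSpace ℂ E] [CompleteSpace E] [SecondCountableTopologyEither X E]

noncomputable def integralCLM (μ : Measure X) [IsFiniteMeasure μ] : C(X, E) →L[ℂ] E :=
  L1.integralCLM' ℂ ∘L toLp 1 μ ℂ

theorem integralCLM_apply (μ : Measure X) [IsFiniteMeasure μ] (f : C(X, E)) :
    integralCLM μ f = ∫ x, f x ∂μ := by
  rw [integralCLM, ContinuousLinearMap.comp_apply, ← L1.integral_eq', L1.integral_eq_integral]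
  exact integral_congr_ae (coeFn_toLp μ f)

end ContinuousMap

namespace UnitAddTorus

variable {d : Type*} [Fintype d]

theorem integral_eq_of_integral_mFourier_eq {μ ν : Measure (UnitAddTorus d)} [IsFiniteMeasure μ]
    [IsFiniteMeasure ν] (h : ∀ n, ∫ x, mFourier n x ∂μ = ∫ x, mFourier n x ∂ν)
    (f : C(UnitAddTorus d, ℂ)) : ∫ x, f x ∂μ = ∫ x, f x ∂ν := by
  have hdense : Dense (Submodule.span ℂ (range (mFourier (d := d))) : Set C(UnitAddTorus d, ℂ)) :=
    Submodule.dense_iff_topologicalClosure_eq_top.mpr span_mFourier_closure_eq_top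
  have hCLM := ContinuousLinearMap.ext_on hdense (f := ContinuousMap.integralCLM μ)
    (g := ContinuousMap.integralCLM ν) (by
      rintro _ ⟨n, rfl⟩
      simpa [ContinuousMap.integralCLM_apply] using h n)
  simpa [ContinuousMap.integralCLM_apply] using congr($hCLM f)

theorem measure_ext_of_integral_mFourier_eq {μ ν : Measure (UnitAddTorus d)} [IsFiniteMeasure μ]
    [IsFiniteMeasure ν] (h : ∀ n, ∫ x, mFourier n x ∂μ = ∫ x, mFourier n x ∂ν) : μ = ν := by
  refine ext_of_forall_integral_eq_of_IsFiniteMeasure fun f => ?_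
  have := integral_eq_of_integral_mFourier_eq h ⟨fun x => (f x : ℂ), by fun_prop⟩
  simp only [ContinuousMap.coe_mk] at this
  exact_mod_cast this

theorem mFourier_apply_add (n : d → ℤ) (x y : UnitAddTorus d) :
    mFourier n (x + y) = mFourier n x * mFourier n y := by
  simp only [mFourier, ContinuousMap.coe_mk, Pi.add_apply, fourier_apply, smul_add,
    AddCircle.toCircle_add, Circle.coe_mul, Finset.prod_mul_distrib]

theorem eq_top_of_isClosed_of_forall_mFourier_ne_one {H : AddSubgroup (UnitAddTorus d)}
    (hH : IsClosed (H : Set (UnitAddTorus d)))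
    (hchar : ∀ n ≠ 0, ∃ h ∈ H, mFourier n h ≠ 1) : H = ⊤ := by
  have : CompactSpace H := isCompact_iff_compactSpace.mp hH.isCompact
  set μ := addHaarMeasure (⊤ : PositiveCompacts (UnitAddTorus d))
  set ν := (addHaarMeasure (⊤ : PositiveCompacts H)).map ((↑) : H → UnitAddTorus d)
  have : IsProbabilityMeasure ν := isProbabilityMeasure_map (by fun_prop)
  have hνμ : ν = μ := by
    refine measure_ext_of_integral_mFourier_eq (μ := ν) (ν := μ) fun n => ?_
    rcases eq_or_ne n 0 with rfl | hn
    · simp [mFourier_zero]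
    obtain ⟨h, hH, hne⟩ := hchar n hn
    rw [integral_map (by fun_prop) (by fun_prop),
      integral_eq_zero_of_add_left_eq_mul μ hne (mFourier_apply_add n h),
      integral_eq_zero_of_add_left_eq_mul (G := H) _ (g := ⟨h, hH⟩) hne
        fun x => mFourier_apply_add n h x]
  have hcompl : μ (H : Set (UnitAddTorus d))ᶜ = 0 := by
    rw [← hνμ, Measure.map_apply (by fun_prop) hH.isOpen_compl.measurableSet,
      preimage_compl, Subtype.coe_preimage_self, compl_univ, measure_empty]
  rw [← AddSubgroup.coe_eq_univ, ← compl_empty_iff]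
  exact (hH.isOpen_compl.measure_eq_zero_iff μ).mp hcompl

def linearFlow (a : d → ℝ) : ℝ →+ UnitAddTorus d where
  toFun t i := (t * a i : ℝ)
  map_zero' := by ext; simp
  map_add' s t := by ext; simp [add_mul]

theorem mFourier_linearFlow (a : d → ℝ) (n : d → ℤ) (t : ℝ) :
    mFourier n (linearFlow a t) = exp (2 * π * I * (t * ∑ i, n i * a i : ℝ)) := by
  simp only [mFourier, linearFlow, ContinuousMap.coe_mk, AddMonoidHom.coe_mk, ZeroHom.coe_mk,
    fourier_coe_apply, ← Complex.exp_sum]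
  push_cast
  rw [Finset.mul_sum, Finset.mul_sum]
  exact congr_arg exp (Finset.sum_congr rfl fun i _ => by ring)

theorem denseRange_linearFlow {a : d → ℝ} (ha : LinearIndependent ℚ a) :
    DenseRange (linearFlow a) := by
  have hH : (linearFlow a).range.topologicalClosure = ⊤ := by
    refine eq_top_of_isClosed_of_forall_mFourier_ne_one (AddSubgroup.isClosed_topologicalClosure _)
      fun n hn => ?_
    set s := ∑ i, (n i : ℝ) * a i
    have hs : s ≠ 0 := by
      intro hs
      refine hn (funext (Fintype.linearIndependent_iff.mp (ha.restrict_scalars' ℤ) n ?_))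
      simpa [zsmul_eq_mul] using hs
    refine ⟨linearFlow a (1 / (2 * s)), AddSubgroup.le_topologicalClosure _ ⟨_, rfl⟩, ?_⟩
    rw [mFourier_linearFlow, show 1 / (2 * s) * s = 1 / 2 by field_simp,
      show 2 * π * I * ((1 / 2 : ℝ) : ℂ) = π * I by push_cast; ring, exp_pi_mul_I]
    norm_num
  rw [DenseRange, dense_iff_closure_eq, ← AddMonoidHom.coe_range,
    ← AddSubgroup.topologicalClosure_coe, hH, AddSubgroup.coe_top]

end UnitAddTorus

open UnitAddTorus

theorem dense_line_image_in_torus_general {m : ℕ}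
    (lam : Fin m → ℝ) (hli : LinearIndependent ℚ lam)
    (τ : ℝ) :
    {v : Fin m → ℂ | ∀ k, ‖v k‖ = Real.exp (-(lam k) * τ)} ⊆
      closure {v : Fin m → ℂ |
        ∃ z : ℂ, z.im = τ ∧ v = fun k => Complex.exp (Complex.I * (lam k : ℂ) * z)} := by
  intro v hv
  set Φ : UnitAddTorus (Fin m) → Fin m → ℂ :=
    fun y k => Real.exp (-(lam k) * τ) * AddCircle.toCircle (y k)
  have hΦ : Continuous Φ := by fun_prop
  have hv : v = Φ fun k => ((arg (v k) / (2 * π) : ℝ) : UnitAddCircle) := by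
    funext k
    simp only [Φ, AddCircle.toCircle_apply_mk, Circle.coe_exp, ← hv k]
    rw [show 2 * π / 1 * (arg (v k) / (2 * π)) = arg (v k) by field_simp]
    exact (norm_mul_exp_arg_mul_I (v k)).symm
  have hline : ∀ t, Φ (linearFlow lam t) =
      fun k => Complex.exp (Complex.I * (lam k : ℂ) * (2 * π * t + τ * I)) := by
    intro t
    funext k
    simp only [Φ, linearFlow, AddMonoidHom.coe_mk, ZeroHom.coe_mk, AddCircle.toCircle_apply_mk,
      Circle.coe_exp, ofReal_exp, ← Complex.exp_add]
    congr 1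
    push_cast
    linear_combination (-(lam k : ℂ) * τ) * I_mul_I
  rw [hv]
  refine closure_mono ?_ (image_closure_subset_closure_image hΦ
    ⟨_, (denseRange_linearFlow hli).closure_range ▸ mem_univ _, rfl⟩)
  rintro - ⟨-, ⟨t, rfl⟩, rfl⟩
  exact ⟨_, by simp, hline t⟩

/-- Let `λ₁,…,λ_m` be positive reals, linearly independent over `ℚ`, and `τ > 0`. Then
the image of the horizontal line `{Im z = τ}` under `z ↦ (e^{iλ₁z},…,e^{iλ_m z})` is
dense in the real torus `T = {v ∈ ℂᵐ : |v_k| = e^{-λ_k τ} for all k}`. -/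
theorem dense_line_image_in_torus {m : ℕ} (hm : 1 ≤ m)
    (lam : Fin m → ℝ) (hpos : ∀ i, 0 < lam i) (hli : LinearIndependent ℚ lam)
    (τ : ℝ) (hτ : 0 < τ) :
    {v : Fin m → ℂ | ∀ k, ‖v k‖ = Real.exp (-(lam k) * τ)} ⊆
      closure {v : Fin m → ℂ |
        ∃ z : ℂ, z.im = τ ∧ v = fun k => Complex.exp (Complex.I * (lam k : ℂ) * z)} :=
  dense_line_image_in_torus_general lam hli τ
end

section
/- Fix n ≥ 1 and d ∈ ℕ. For a holomorphic map f : ℂ → ℂⁿ let J_d f : ℂ → (ℂⁿ)^{d+1} be the jet map z ↦ (f(z), f'(z), …, f^{(d)}(z)). Then the set of entire maps f : ℂ → ℂⁿ for which J_d f has dense image in (ℂⁿ)^{d+1} is dense in the space of all entire maps ℂ → ℂⁿ with the topology of locally uniform convergence; concretely: for every entire f : ℂ → ℂⁿ, every R > 0 and every ε > 0 there exists an entire map φ : ℂ → ℂⁿ such that ‖φ(z) − f(z)‖ < ε for all |z| ≤ R and the closure of the image of z ↦ (φ(z), φ'(z), …, φ^{(d)}(z)) is all of (ℂⁿ)^{d+1}.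 -/
/-!
Choose points `a m → ∞` and a sequence `V m` of jets having every jet as a cluster point, and
build `φ = f + ∑ g m` inductively: `g m` is small on a disc `‖z‖ ≤ r m` containing `‖z‖ ≤ R` and
the unit discs around the earlier points, and it corrects the `d`-jet of the partial sum at `a m`
to exactly `V m`. Such corrections exist because `(z - a) ^ k * (z / a) ^ M` has vanishing
`(k-1)`-jet at `a`, `k`-th derivative `k!` there, and is tiny on `‖z‖ ≤ r < ‖a‖` once `M` is
large. All later corrections are small on the unit circle around `a m`, so by Cauchy's estimate
the jet of `φ` at `a m` is within `d! * ∑_{j > m} δ j` of `V m`; hence the jets of `φ` are dense.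
-/

open Filter Metric Set Topology

theorem iteratedDeriv_sub_pow_mul_of_le {𝕜 : Type*} [NontriviallyNormedField 𝕜] {a : 𝕜}
    {q : 𝕜 → 𝕜} {j k : ℕ} (hq : ContDiffAt 𝕜 j q a) (hjk : j ≤ k) :
    iteratedDeriv j (fun z => (z - a) ^ k * q z) a =
      if j = k then (k.factorial : 𝕜) * q a else 0 := by
  have hpow (i : ℕ) :
      iteratedDeriv i (fun z => (z - a) ^ k) a = if i = k then (k.factorial : 𝕜) else 0 := by
    rw [iteratedDeriv_comp_sub_const i (· ^ k) a]
    simp only [sub_self, iteratedDeriv_fun_pow_zero]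
    split_ifs <;> simp
  rw [iteratedDeriv_fun_mul (by fun_prop) hq]
  simp only [hpow]
  split_ifs with h
  · rw [Finset.sum_eq_single k (fun i _ hik => by simp [hik])
      (fun hk => absurd (Finset.mem_range.2 (by omega)) hk)]
    simp [h]
  · exact Finset.sum_eq_zero fun i hi => by
      have : i ≠ k := by have := Finset.mem_range.1 hi; omega
      simp [this]

theorem exists_seq_forall_mapClusterPt (X : Type*) [TopologicalSpace X]
    [TopologicalSpace.SeparableSpace X] [Nonempty X] :
    ∃ v : ℕ → X, ∀ x, MapClusterPt x atTop v := by
  obtain ⟨e, he⟩ := TopologicalSpace.exists_dense_seq X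
  refine ⟨fun m => e m.unpair.1, fun x => mapClusterPt_iff_frequently.2 fun s hs => ?_⟩
  obtain ⟨i, hi⟩ := he.mem_nhds hs
  exact frequently_atTop.2 fun L => ⟨Nat.pair i L, Nat.right_le_pair i L, by simpa using hi⟩

theorem DenseRange.of_tendsto_dist {X : Type*} [PseudoMetricSpace X] {p v : ℕ → X}
    (hv : ∀ x, MapClusterPt x atTop v) (hpv : Tendsto (fun m => dist (p m) (v m)) atTop (𝓝 0)) :
    DenseRange p := by
  refine Metric.denseRange_iff.2 fun x ε hε => ?_
  obtain ⟨m, hxv, hpvm⟩ := ((hv x).frequently (ball_mem_nhds x (half_pos hε))).and_eventually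
    (hpv.eventually (gt_mem_nhds (half_pos hε))) |>.exists
  refine ⟨m, ?_⟩
  linarith [dist_triangle x (v m) (p m), dist_comm (v m) x, dist_comm (v m) (p m)]

section

variable {E : Type*} [NormedAddCommGroup E]

theorem norm_tsum_nat_add_le {g : ℕ → ℂ → E} {r δ : ℕ → ℝ} (hδ : Summable δ)
    (hgδ : ∀ j z, ‖z‖ ≤ r j → ‖g j z‖ ≤ δ j) (hr : Monotone r) {m : ℕ} {z : ℂ}
    (hz : ‖z‖ ≤ r m) : ‖∑' j, g (j + m) z‖ ≤ ∑' j, δ (j + m) :=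
  tsum_of_norm_bounded ((summable_nat_add_iff m).2 hδ).hasSum fun j =>
    hgδ _ _ (hz.trans (hr (Nat.le_add_left m j)))

theorem summable_apply_of_norm_le [CompleteSpace E] {g : ℕ → ℂ → E} {r δ : ℕ → ℝ}
    (hδ : Summable δ) (hgδ : ∀ j z, ‖z‖ ≤ r j → ‖g j z‖ ≤ δ j) (hr : Tendsto r atTop atTop)
    (z : ℂ) : Summable fun j => g j z :=
  .of_norm_bounded_eventually_nat hδ ((hr.eventually_ge_atTop ‖z‖).mono fun j => hgδ j z)

variable [NormedSpace ℂ E]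

noncomputable def jet (d : ℕ) (f : ℂ → E) (z : ℂ) : Fin (d + 1) → E :=
  fun k => iteratedDeriv k f z

theorem exists_differentiable_norm_le_iteratedDeriv_eq_single {a : ℂ} {r η : ℝ} (hr : 0 ≤ r)
    (ha : r < ‖a‖) (hη : 0 < η) (k : ℕ) (v : E) :
    ∃ g : ℂ → E, Differentiable ℂ g ∧ (∀ z, ‖z‖ ≤ r → ‖g z‖ ≤ η) ∧
      ∀ j ≤ k, iteratedDeriv j g a = if j = k then v else 0 := by
  have ha₀ : a ≠ 0 := norm_pos_iff.1 (hr.trans_lt ha)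
  set ρ := r / ‖a‖
  set u : E := (k.factorial : ℂ)⁻¹ • v
  set C := (r + ‖a‖) ^ k * ‖u‖
  obtain ⟨M, hM⟩ : ∃ M : ℕ, C * ρ ^ M < η :=
    (((tendsto_pow_atTop_nhds_zero_of_lt_one (by positivity)
      ((div_lt_one (hr.trans_lt ha)).2 ha)).const_mul C).eventually
      (gt_mem_nhds (by simpa using hη))).exists
  have hq : Differentiable ℂ fun z : ℂ => (z / a) ^ M := by fun_prop
  refine ⟨fun z => ((z - a) ^ k * (z / a) ^ M) • u, by fun_prop, fun z hz => ?_, fun j hj => ?_⟩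
  · have hza : ‖z / a‖ ≤ ρ := by
      rw [norm_div]
      exact div_le_div_of_nonneg_right hz (norm_nonneg a)
    calc ‖((z - a) ^ k * (z / a) ^ M) • u‖ = ‖z - a‖ ^ k * ‖z / a‖ ^ M * ‖u‖ := by
          rw [norm_smul, norm_mul, norm_pow, norm_pow]
      _ ≤ (r + ‖a‖) ^ k * ρ ^ M * ‖u‖ := by
          gcongr
          exact (norm_sub_le z a).trans (by gcongr)
      _ ≤ η := by linarith
  · rw [iteratedDeriv_smul_const (by fun_prop), iteratedDeriv_sub_pow_mul_of_le
      hq.contDiff.contDiffAt hj]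
    split_ifs
    · rw [div_self ha₀, one_pow, mul_one, smul_smul,
        mul_inv_cancel₀ (Nat.cast_ne_zero.2 k.factorial_ne_zero), one_smul]
    · exact zero_smul ℂ u

variable [CompleteSpace E]

theorem jet_add {f g : ℂ → E} (hf : Differentiable ℂ f) (hg : Differentiable ℂ g) (d : ℕ)
    (z : ℂ) : jet d (f + g) z = jet d f z + jet d g z :=
  funext fun _ => iteratedDeriv_add hf.contDiff.contDiffAt hg.contDiff.contDiffAt

theorem jet_sub {f g : ℂ → E} (hf : Differentiable ℂ f) (hg : Differentiable ℂ g) (d : ℕ)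
    (z : ℂ) : jet d (f - g) z = jet d f z - jet d g z :=
  funext fun _ => iteratedDeriv_sub hf.contDiff.contDiffAt hg.contDiff.contDiffAt

theorem exists_differentiable_norm_le_iteratedDeriv_eq {a : ℂ} {r : ℝ} (hr : 0 ≤ r)
    (ha : r < ‖a‖) (N : ℕ) (w : ℕ → E) {η : ℝ} (hη : 0 < η) :
    ∃ g : ℂ → E, Differentiable ℂ g ∧ (∀ z, ‖z‖ ≤ r → ‖g z‖ ≤ η) ∧
      ∀ k < N, iteratedDeriv k g a = w k := by
  induction N generalizing η with
  | zero => exact ⟨0, differentiable_const 0, by simp [hη.le], by simp⟩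
  | succ N ih =>
    obtain ⟨g₀, hg₀, hg₀r, hg₀a⟩ := ih (half_pos hη)
    obtain ⟨g₁, hg₁, hg₁r, hg₁a⟩ := exists_differentiable_norm_le_iteratedDeriv_eq_single hr ha
      (half_pos hη) N (w N - iteratedDeriv N g₀ a)
    refine ⟨g₀ + g₁, hg₀.add hg₁, fun z hz => ?_, fun k hk => ?_⟩
    · have := add_le_add (hg₀r z hz) (hg₁r z hz)
      exact (norm_add_le _ _).trans (by linarith)
    · rw [iteratedDeriv_add hg₀.contDiff.contDiffAt hg₁.contDiff.contDiffAt, hg₁a k (by omega)]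
      rcases (Nat.lt_succ_iff_lt_or_eq.1 hk) with hk | rfl
      · simp [hg₀a k hk, hk.ne]
      · simp

theorem exists_differentiable_norm_le_jet_eq {a : ℂ} {r η : ℝ} (hr : 0 ≤ r) (ha : r < ‖a‖)
    (hη : 0 < η) (d : ℕ) (w : Fin (d + 1) → E) :
    ∃ g : ℂ → E, Differentiable ℂ g ∧ (∀ z, ‖z‖ ≤ r → ‖g z‖ ≤ η) ∧ jet d g a = w := by
  obtain ⟨g, hg, hgr, hga⟩ := exists_differentiable_norm_le_iteratedDeriv_eq hr ha (d + 1)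
    (fun k => if hk : k < d + 1 then w ⟨k, hk⟩ else 0) hη
  exact ⟨g, hg, hgr, funext fun k => (hga k k.isLt).trans (dif_pos k.isLt)⟩

theorem norm_jet_le_of_forall_mem_sphere_norm_le {h : ℂ → E} (hh : Differentiable ℂ h) (d : ℕ)
    {c : ℂ} {C : ℝ} (hC : ∀ z ∈ sphere c 1, ‖h z‖ ≤ C) : ‖jet d h c‖ ≤ d.factorial * C := by
  have hC₀ : 0 ≤ C := (norm_nonneg _).trans (hC (c + 1) (by simp))
  refine (pi_norm_le_iff_of_nonneg (by positivity)).2 fun k => ?_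
  calc ‖iteratedDeriv k h c‖ ≤ k.1.factorial * C / 1 ^ k.1 :=
        Complex.norm_iteratedDeriv_le_of_forall_mem_sphere_norm_le k one_pos hh.diffContOnCl hC
    _ ≤ d.factorial * C := by
        rw [one_pow, div_one]
        gcongr
        omega

theorem differentiable_tsum_of_norm_le {g : ℕ → ℂ → E} (hg : ∀ j, Differentiable ℂ (g j))
    {r δ : ℕ → ℝ} (hδ : Summable δ) (hgδ : ∀ j z, ‖z‖ ≤ r j → ‖g j z‖ ≤ δ j)
    (hr : Tendsto r atTop atTop) : Differentiable ℂ fun z => ∑' j, g j z := by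
  intro z
  obtain ⟨J, hJ⟩ := eventually_atTop.1 (hr.eventually_ge_atTop (‖z‖ + 1))
  have htail : DifferentiableOn ℂ (fun w => ∑' j, g (j + J) w) (ball 0 (‖z‖ + 1)) :=
    Complex.differentiableOn_tsum_of_summable_norm ((summable_nat_add_iff J).2 hδ)
      (fun j => (hg _).differentiableOn) isOpen_ball fun j w hw =>
        hgδ _ _ ((mem_ball_zero_iff.1 hw).le.trans (hJ _ (Nat.le_add_left J j)))
  have hsplit : (fun w => ∑' j, g j w) =
      fun w => ∑ j ∈ Finset.range J, g j w + ∑' j, g (j + J) w :=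
    funext fun w => ((summable_apply_of_norm_le hδ hgδ hr w).sum_add_tsum_nat_add J).symm
  rw [hsplit]
  exact (Differentiable.fun_sum fun j _ => hg j).differentiableAt.add
    (htail.differentiableAt (isOpen_ball.mem_nhds (by simp)))

theorem exists_seq_differentiable_jet_add_sum_eq {f : ℂ → E} (hf : Differentiable ℂ f)
    (d : ℕ) {a : ℕ → ℂ} {r δ : ℕ → ℝ} (hr : ∀ m, 0 ≤ r m) (ha : ∀ m, r m < ‖a m‖)
    (hδ : ∀ m, 0 < δ m) (V : ℕ → Fin (d + 1) → E) :
    ∃ g : ℕ → ℂ → E, (∀ m, Differentiable ℂ (g m)) ∧ (∀ m z, ‖z‖ ≤ r m → ‖g m z‖ ≤ δ m) ∧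
      ∀ m, jet d (f + ∑ j ∈ Finset.range (m + 1), g j) (a m) = V m := by
  choose G hGd hGr hGa using fun m (S : ℂ → E) =>
    exists_differentiable_norm_le_jet_eq (hr m) (ha m) (hδ m) d (V m - jet d S (a m))
  let S : ℕ → ℂ → E := fun m => Nat.rec f (fun m Sm => Sm + G m Sm) m
  have hS (m : ℕ) : S m = f + ∑ j ∈ Finset.range m, G j (S j) := by
    induction m with
    | zero => simp [S]
    | succ m ih => rw [Finset.sum_range_succ, ← add_assoc, ← ih]
  have hSd (m : ℕ) : Differentiable ℂ (S m) := by
    induction m with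
    | zero => exact hf
    | succ m ih => exact ih.add (hGd m _)
  refine ⟨fun m => G m (S m), fun m => hGd m _, fun m => hGr m _, fun m => ?_⟩
  rw [← hS (m + 1)]
  change jet d (S m + G m (S m)) (a m) = V m
  rw [jet_add (hSd m) (hGd m _), hGa, add_sub_cancel]

theorem exists_differentiable_norm_sub_le_dist_jet_le {f : ℂ → E} (hf : Differentiable ℂ f)
    (d : ℕ) {a : ℕ → ℂ} {r δ : ℕ → ℝ} (hr₀ : 0 ≤ r 0) (ha : ∀ m, r m < ‖a m‖)
    (har : ∀ m, ‖a m‖ + 1 ≤ r (m + 1)) (hδ : ∀ m, 0 < δ m) (hδs : Summable δ)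
    (V : ℕ → Fin (d + 1) → E) :
    ∃ φ : ℂ → E, Differentiable ℂ φ ∧ (∀ z, ‖z‖ ≤ r 0 → ‖φ z - f z‖ ≤ ∑' j, δ j) ∧
      ∀ m, dist (jet d φ (a m)) (V m) ≤ d.factorial * ∑' j, δ (j + (m + 1)) := by
  have hr_succ (m : ℕ) : r m + 1 ≤ r (m + 1) := by linarith [ha m, har m]
  have hr_mono : Monotone r := monotone_nat_of_le_succ fun m => by linarith [hr_succ m]
  have hr_top : Tendsto r atTop atTop := by
    refine tendsto_atTop_mono (fun m => ?_) (tendsto_atTop_add_const_left _ (r 0)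
      tendsto_natCast_atTop_atTop)
    induction m with
    | zero => simp
    | succ m ih => push_cast; linarith [hr_succ m]
  obtain ⟨g, hgd, hgδ, hgV⟩ := exists_seq_differentiable_jet_add_sum_eq hf d
    (fun m => hr₀.trans (hr_mono (Nat.zero_le m))) ha hδ V
  set T : ℂ → E := fun z => ∑' j, g j z
  have htail (m : ℕ) :
      f + T - (f + ∑ j ∈ Finset.range m, g j) = fun z => ∑' j, g (j + m) z := by
    funext z
    simp [T, ← (summable_apply_of_norm_le hδs hgδ hr_top z).sum_add_tsum_nat_add m]
  have hφ : Differentiable ℂ (f + T) :=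
    hf.add (differentiable_tsum_of_norm_le hgd hδs hgδ hr_top)
  refine ⟨f + T, hφ, fun z hz => ?_, fun m => ?_⟩
  · simpa using norm_tsum_nat_add_le hδs hgδ hr_mono (m := 0) hz
  · have hσ : Differentiable ℂ (f + ∑ j ∈ Finset.range (m + 1), g j) :=
      hf.add (Differentiable.sum fun j _ => hgd j)
    rw [dist_eq_norm, ← hgV m, ← jet_sub hφ hσ, htail]
    refine norm_jet_le_of_forall_mem_sphere_norm_le ?_ d fun z hz => ?_
    · rw [← htail]
      exact hφ.sub hσ
    · refine norm_tsum_nat_add_le hδs hgδ hr_mono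
        ((norm_le_norm_add_norm_sub' z (a m)).trans ?_)
      rw [← dist_eq_norm, mem_sphere.1 hz]
      exact har m

theorem exists_differentiable_norm_sub_lt_denseRange_jet [TopologicalSpace.SeparableSpace E]
    (d : ℕ) {f : ℂ → E} (hf : Differentiable ℂ f) {R ε : ℝ} (hR : 0 ≤ R) (hε : 0 < ε) :
    ∃ φ : ℂ → E, Differentiable ℂ φ ∧ (∀ z, ‖z‖ ≤ R → ‖φ z - f z‖ < ε) ∧
      DenseRange (jet d φ) := by
  obtain ⟨V, hV⟩ := exists_seq_forall_mapClusterPt (Fin (d + 1) → E)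
  have ha (m : ℕ) : ‖((R + 2 * m + 1 : ℝ) : ℂ)‖ = R + 2 * m + 1 := by
    rw [Complex.norm_real, Real.norm_of_nonneg (by positivity)]
  have hδ : Summable fun m : ℕ => ε / 4 * (1 / 2) ^ m := summable_geometric_two.mul_left _
  obtain ⟨φ, hφ, hφf, hφV⟩ := exists_differentiable_norm_sub_le_dist_jet_le hf d
    (a := fun m => ((R + 2 * m + 1 : ℝ) : ℂ)) (r := fun m => R + 2 * m) (by simpa using hR)
    (fun m => by simp only [ha]; linarith) (fun m => by simp only [ha]; push_cast; linarith)
    (fun m => by positivity) hδ V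
  refine ⟨φ, hφ, fun z hz => (hφf z (by simpa using hz)).trans_lt ?_,
    (DenseRange.of_tendsto_dist hV (squeeze_zero (fun _ => dist_nonneg) hφV ?_)).mono
      (range_comp_subset_range _ (jet d φ))⟩
  · rw [tsum_mul_left, tsum_geometric_two]
    linarith
  · simpa using ((tendsto_sum_nat_add fun m : ℕ => ε / 4 * (1 / 2) ^ m).comp
      (tendsto_add_atTop_nat 1)).const_mul (d.factorial : ℝ)

end

theorem dense_entire_maps_with_dense_jet_general {n : ℕ} (d : ℕ)
    (f : ℂ → Fin n → ℂ) (hf : Differentiable ℂ f) (R ε : ℝ) (hR : 0 < R) (hε : 0 < ε) :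
    ∃ φ : ℂ → Fin n → ℂ, Differentiable ℂ φ ∧
      (∀ z : ℂ, ‖z‖ ≤ R → ‖φ z - f z‖ < ε) ∧
      Dense (Set.range fun z : ℂ => fun k : Fin (d + 1) => iteratedDeriv k.1 φ z) :=
  exists_differentiable_norm_sub_lt_denseRange_jet d hf hR.le hε

/-- Entire maps `ℂ → ℂⁿ` whose `d`-jet `z ↦ (f(z), f'(z), …, f^{(d)}(z))` has dense image
in `(ℂⁿ)^{d+1}` are dense among all entire maps `ℂ → ℂⁿ` for the topology of locally
uniform convergence. -/
theorem dense_entire_maps_with_dense_jet {n : ℕ} (hn : 1 ≤ n) (d : ℕ)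
    (f : ℂ → Fin n → ℂ) (hf : Differentiable ℂ f) (R ε : ℝ) (hR : 0 < R) (hε : 0 < ε) :
    ∃ φ : ℂ → Fin n → ℂ, Differentiable ℂ φ ∧
      (∀ z : ℂ, ‖z‖ ≤ R → ‖φ z - f z‖ < ε) ∧
      Dense (Set.range fun z : ℂ => fun k : Fin (d + 1) => iteratedDeriv k.1 φ z) :=
  dense_entire_maps_with_dense_jet_general d f hf R ε hR hε
end
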